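/- Let T be a trek with consecutively numbered nodes and Σ(ζ) the matrix with (i,j) entry Σ_T binom(ℓ+r,ℓ) ζ^{ℓ+r} over treks T from i to j. Let i ≠ j be nodes with shortest trek of length (ℓ, r), and K ⊆ V(T) ∖ {i,j}. Then the polynomial det(Σ(ζ)_{iK, jK}) is either identically zero or its lowest-degree non-zero term has degree at least ℓ + r. Moreover, if i and j are adjacent in T, then the lowest-degree term equals ζ (with Σ_{iK,jK} formed with rows and columns ordered consistently by the node numbering). -/

import Mathlib

/-!
Entry `(p, q)` of `Σ(ζ)` is divisible by `ζ ^ |p - q|`, since every trek from `p` to `q` has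
length at least `|p - q|`. In a Leibniz term of the minor the exponents therefore add up to at
least `|Σ rows - Σ columns| = |i - j|`, because the row set `{i} ∪ K` and the column set
`{j} ∪ K` share `K`. If `i` and `j` are adjacent, no node of `K` lies between them, so the
increasing enumeration of the columns is that of the rows with `i` replaced by `j`. Every
off-diagonal entry of the minor is then divisible by `ζ`, and a non-identity permutation moves
two indices, so modulo `ζ²` the minor is its diagonal product `Σ_{ij} ∏ Σ_{kk} ≡ ζ · 1`.
-/

open Matrix Polynomial

/-- The covariance matrix `Σ(ζ)` of the trek graph with nodes `0, …, n-1`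
numbered consecutively from the left leaf through the top node `t` to the
right leaf: the `(i,j)` entry is `Σ_T binom(ℓ+r, ℓ) ζ^{ℓ+r}`, summed over all
`(ℓ,r)`-treks from `i` to `j` (treks correspond to common ancestors `s`, with
branch lengths `ℓ = dist(s,i)`, `r = dist(s,j)`). -/
noncomputable def trekSigma (n t : ℕ) : Matrix (Fin n) (Fin n) (Polynomial ℝ) :=
  Matrix.of fun i j =>
    ∑ s : Fin n,
      if (((i : ℕ) ≤ (s : ℕ) ∧ (s : ℕ) ≤ t) ∨ (t ≤ (s : ℕ) ∧ (s : ℕ) ≤ (i : ℕ))) ∧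
          (((j : ℕ) ≤ (s : ℕ) ∧ (s : ℕ) ≤ t) ∨ (t ≤ (s : ℕ) ∧ (s : ℕ) ≤ (j : ℕ))) then
        Polynomial.C ((Nat.dist (s : ℕ) (i : ℕ) + Nat.dist (s : ℕ) (j : ℕ)).choose
            (Nat.dist (s : ℕ) (i : ℕ)) : ℝ) *
          Polynomial.X ^ (Nat.dist (s : ℕ) (i : ℕ) + Nat.dist (s : ℕ) (j : ℕ))
      else 0

/-- The minor of `S` with rows indexed by the finset `R` and columns by the
finset `C` (of equal cardinality), rows and columns taken in increasing
order. -/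
noncomputable def finMinor {ι R' : Type*} [Fintype ι] [LinearOrder ι] [CommRing R']
    (S : Matrix ι ι R') (R C : Finset ι) (h : R.card = C.card) : R' :=
  (S.submatrix (fun a : Fin R.card => ((R.orderIsoOfFin rfl a : R) : ι))
    (fun b : Fin R.card => ((C.orderIsoOfFin h.symm b : C) : ι))).det

theorem Nat.dist_sum_le_sum_dist {ι : Type*} (s : Finset ι) (f g : ι → ℕ) :
    Nat.dist (∑ a ∈ s, f a) (∑ a ∈ s, g a) ≤ ∑ a ∈ s, Nat.dist (f a) (g a) := by
  classical
  induction s using Finset.induction_on with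
  | empty => simp [Nat.dist_self]
  | insert a s ha ih =>
    simp only [Finset.sum_insert ha]
    unfold Nat.dist at *
    omega

theorem Finset.sum_orderEmbOfFin {α M : Type*} [LinearOrder α] [AddCommMonoid M]
    (s : Finset α) {k : ℕ} (h : s.card = k) (f : α → M) :
    ∑ a, f (s.orderEmbOfFin h a) = ∑ x ∈ s, f x := by
  conv_rhs => rw [← s.map_orderEmbOfFin_univ h, Finset.sum_map]
  rfl

theorem Polynomial.coeff_one_mul_of_coeff_zero_eq_zero {R : Type*} [Semiring R] {p : R[X]}
    (hp : p.coeff 0 = 0) (q : R[X]) : (p * q).coeff 1 = p.coeff 1 * q.coeff 0 := by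
  simp [coeff_mul, Finset.Nat.antidiagonal_succ, hp]

namespace Matrix

variable {m R : Type*} [Fintype m] [DecidableEq m] [CommRing R]

theorem pow_dvd_det_of_pow_dvd (M : Matrix m m R) (x : R) (d : m → m → ℕ) (D : ℕ)
    (hM : ∀ a b, x ^ d a b ∣ M a b) (hD : ∀ σ : Equiv.Perm m, D ≤ ∑ a, d (σ a) a) :
    x ^ D ∣ M.det := by
  rw [det_apply']
  refine Finset.dvd_sum fun σ _ => dvd_mul_of_dvd_right ?_ _
  calc x ^ D ∣ x ^ ∑ a, d (σ a) a := pow_dvd_pow x (hD σ)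
    _ = ∏ a, x ^ d (σ a) a := (Finset.prod_pow_eq_pow_sum _ _ _).symm
    _ ∣ ∏ a, M (σ a) a := Finset.prod_dvd_prod_of_dvd _ _ fun a _ => hM _ _

theorem sq_dvd_det_sub_prod_diag (M : Matrix m m R) (x : R)
    (hM : ∀ a b, a ≠ b → x ∣ M a b) : x ^ 2 ∣ M.det - ∏ a, M a a := by
  rw [det_apply', ← Finset.add_sum_erase _ _ (Finset.mem_univ 1)]
  simp only [Equiv.Perm.sign_one, Units.val_one, Int.cast_one, one_mul, Equiv.Perm.coe_one,
    id_eq, add_sub_cancel_left]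
  refine Finset.dvd_sum fun σ hσ => dvd_mul_of_dvd_right ?_ _
  obtain ⟨a, ha⟩ : ∃ a, σ a ≠ a := by
    by_contra! h
    exact Finset.ne_of_mem_erase hσ (Equiv.ext h)
  have hσa : σ (σ a) ≠ σ a := fun h => ha (σ.injective h)
  calc x ^ 2 = x * x := sq x
    _ ∣ ∏ b ∈ {a, σ a}, M (σ b) b := by
      rw [Finset.prod_pair ha.symm]
      exact mul_dvd_mul (hM _ _ ha) (hM _ _ hσa)
    _ ∣ ∏ b, M (σ b) b := Finset.prod_dvd_prod_of_subset _ _ _ (Finset.subset_univ _)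

theorem sq_dvd_det_submatrix_update_sub {ι : Type*} [DecidableEq ι] (S : Matrix ι ι R) (x : R)
    (hS : ∀ p q, p ≠ q → x ∣ S p q) {ρ : m → ι} (hρ : Function.Injective ρ) (a₀ : m) {j : ι}
    (hj : ∀ a, ρ a ≠ j) :
    x ^ 2 ∣ (S.submatrix ρ (Function.update ρ a₀ j)).det -
      S (ρ a₀) j * ∏ a ∈ Finset.univ.erase a₀, S (ρ a) (ρ a) := by
  have hdiag : ∏ a, S (ρ a) (Function.update ρ a₀ j a) =
      S (ρ a₀) j * ∏ a ∈ Finset.univ.erase a₀, S (ρ a) (ρ a) := by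
    rw [← Finset.mul_prod_erase _ _ (Finset.mem_univ a₀), Function.update_self]
    exact congrArg _ (Finset.prod_congr rfl fun a ha =>
      by rw [Function.update_of_ne (Finset.ne_of_mem_erase ha)])
  rw [← hdiag]
  refine sq_dvd_det_sub_prod_diag _ x fun a b hab => hS _ _ ?_
  rcases eq_or_ne b a₀ with rfl | hb
  · simpa using hj a
  · simpa [Function.update_of_ne hb] using hρ.ne hab

end Matrix

theorem Finset.orderEmbOfFin_insert_eq_ite {α : Type*} [LinearOrder α] {i j : α}
    {K : Finset α} (hjK : j ∉ K) (hK : ∀ k ∈ K, k < i ↔ k < j) {m : ℕ}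
    (hi : (insert i K).card = m) (hj : (insert j K).card = m) (a : Fin m) :
    (insert j K).orderEmbOfFin hj a =
      if (insert i K).orderEmbOfFin hi a = i then j else (insert i K).orderEmbOfFin hi a := by
  set ρ := (insert i K).orderEmbOfFin hi
  have hρK : ∀ a, ρ a ≠ i → ρ a ∈ K := fun a ha =>
    (Finset.mem_insert.mp ((insert i K).orderEmbOfFin_mem hi a)).resolve_left ha
  refine congrFun (Finset.orderEmbOfFin_unique hj (f := fun a => if ρ a = i then j else ρ a)
    (fun a => ?_) fun a b hab => ?_).symm a
  · split_ifs with ha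
    · exact Finset.mem_insert_self j K
    · exact Finset.mem_insert_of_mem (hρK a ha)
  · have hlt : ρ a < ρ b := ρ.strictMono hab
    dsimp only
    split_ifs with ha hb hb
    · exact absurd (ha.trans hb.symm) hlt.ne
    · have hbK := hρK b hb
      have : ¬ ρ b < j := (hK _ hbK).not.mp (ha ▸ hlt).not_gt
      exact lt_of_le_of_ne (not_lt.mp this) fun h => hjK (h ▸ hbK)
    · exact (hK _ (hρK a ha)).mp (hb ▸ hlt)
    · exact hlt

theorem Fin.lt_iff_lt_of_dist_eq_one {n : ℕ} {i j : Fin n} {K : Finset (Fin n)} (hiK : i ∉ K)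
    (hjK : j ∉ K) (hij : Nat.dist i j = 1) : ∀ k ∈ K, k < i ↔ k < j := fun k hk => by
  have hki : k ≠ i := fun h => hiK (h ▸ hk)
  have hkj : k ≠ j := fun h => hjK (h ▸ hk)
  simp only [Fin.lt_def, Fin.ext_iff, ne_eq] at *
  unfold Nat.dist at hij
  omega
theorem finMinor_eq_det_submatrix {ι R : Type*} [Fintype ι] [LinearOrder ι] [CommRing R]
    (S : Matrix ι ι R) (A B : Finset ι) (h : A.card = B.card) :
    finMinor S A B h = (S.submatrix (A.orderEmbOfFin rfl) (B.orderEmbOfFin h.symm)).det :=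
  rfl

section Trek

variable {n : ℕ} (t : ℕ)

theorem trekSigma_coeff (i j : Fin n) (e : ℕ) :
    (trekSigma n t i j).coeff e = ∑ s : Fin n,
      if ((((i : ℕ) ≤ s ∧ (s : ℕ) ≤ t) ∨ (t ≤ (s : ℕ) ∧ (s : ℕ) ≤ i)) ∧
          (((j : ℕ) ≤ s ∧ (s : ℕ) ≤ t) ∨ (t ≤ (s : ℕ) ∧ (s : ℕ) ≤ j))) ∧
          e = Nat.dist s i + Nat.dist s j then
        ((Nat.dist s i + Nat.dist s j).choose (Nat.dist s i) : ℝ)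
      else 0 := by
  simp only [trekSigma, of_apply, finsetSum_coeff]
  refine Finset.sum_congr rfl fun s _ => ?_
  rw [apply_ite (coeff · e), coeff_C_mul_X_pow, coeff_zero, ← ite_and]

theorem X_pow_dist_dvd_trekSigma (i j : Fin n) :
    (X : ℝ[X]) ^ Nat.dist i j ∣ trekSigma n t i j := by
  refine X_pow_dvd_iff.mpr fun e he => ?_
  rw [trekSigma_coeff]
  refine Finset.sum_eq_zero fun s _ => if_neg fun h => ?_
  have := Nat.dist.triangle_inequality i s j
  rw [Nat.dist_comm (i : ℕ) s] at this
  omega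

theorem trekSigma_coeff_zero_self (k : Fin n) : (trekSigma n t k k).coeff 0 = 1 := by
  have hk : ∀ s : Fin n,
      ((((k : ℕ) ≤ s ∧ (s : ℕ) ≤ t) ∨ (t ≤ (s : ℕ) ∧ (s : ℕ) ≤ k)) ∧
        (((k : ℕ) ≤ s ∧ (s : ℕ) ≤ t) ∨ (t ≤ (s : ℕ) ∧ (s : ℕ) ≤ k))) ∧
        0 = Nat.dist s k + Nat.dist s k ↔ s = k := fun s => by
    unfold Nat.dist
    simp only [Fin.ext_iff]
    omega
  simp only [trekSigma_coeff, hk, Finset.sum_ite_eq', Finset.mem_univ, if_true, Nat.dist_self,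
    Nat.choose_self, Nat.cast_one]

theorem trekSigma_coeff_one_of_dist_eq_one {i j : Fin n} (hij : Nat.dist i j = 1) :
    (trekSigma n t i j).coeff 1 = 1 := by
  obtain ⟨u, hu⟩ : ∃ u : Fin n, ∀ s : Fin n,
      ((((i : ℕ) ≤ s ∧ (s : ℕ) ≤ t) ∨ (t ≤ (s : ℕ) ∧ (s : ℕ) ≤ i)) ∧
        (((j : ℕ) ≤ s ∧ (s : ℕ) ≤ t) ∨ (t ≤ (s : ℕ) ∧ (s : ℕ) ≤ j))) ∧
        1 = Nat.dist s i + Nat.dist s j ↔ s = u := by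
    -- the top of the trek between adjacent nodes is the one nearer to `t`
    refine ⟨if (i : ℕ) ≤ t ∧ (j : ℕ) ≤ t then max i j else min i j, fun s => ?_⟩
    unfold Nat.dist at *
    split_ifs <;> simp only [Fin.ext_iff, Fin.coe_max, Fin.coe_min] <;> omega
  have hu1 : 1 = Nat.dist u i + Nat.dist u j := ((hu u).mpr rfl).2
  simp only [trekSigma_coeff, hu, Finset.sum_ite_eq', Finset.mem_univ, if_true, ← hu1]
  obtain h | h : Nat.dist u i = 0 ∨ Nat.dist u i = 1 := by omega
  all_goals simp [h]

theorem X_dvd_trekSigma_of_ne {i j : Fin n} (hij : i ≠ j) : (X : ℝ[X]) ∣ trekSigma n t i j :=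
  (dvd_pow_self X fun h => hij (Fin.ext (Nat.eq_of_dist_eq_zero h))).trans
    (X_pow_dist_dvd_trekSigma t i j)

variable {i j : Fin n} {K : Finset (Fin n)}

theorem X_pow_dist_dvd_finMinor (hiK : i ∉ K) (hjK : j ∉ K)
    (h : (insert i K).card = (insert j K).card) :
    (X : ℝ[X]) ^ Nat.dist i j ∣ finMinor (trekSigma n t) (insert i K) (insert j K) h := by
  set ρ := (insert i K).orderEmbOfFin rfl
  set γ := (insert j K).orderEmbOfFin h.symm
  refine pow_dvd_det_of_pow_dvd _ X (fun a b => Nat.dist (ρ a) (γ b)) _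
    (fun a b => X_pow_dist_dvd_trekSigma t _ _) fun σ => ?_
  calc Nat.dist i j = Nat.dist (∑ a, (ρ (σ a) : ℕ)) (∑ a, (γ a : ℕ)) := by
        rw [Equiv.sum_comp σ (fun a => (ρ a : ℕ)), Finset.sum_orderEmbOfFin,
          Finset.sum_orderEmbOfFin, Finset.sum_insert hiK, Finset.sum_insert hjK,
          Nat.dist_add_add_right]
    _ ≤ _ := Nat.dist_sum_le_sum_dist _ _ _

theorem finMinor_coeff_one_of_dist_eq_one (hiK : i ∉ K) (hjK : j ∉ K) (hij : Nat.dist i j = 1)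
    (h : (insert i K).card = (insert j K).card) :
    (finMinor (trekSigma n t) (insert i K) (insert j K) h).coeff 1 = 1 := by
  set ρ := (insert i K).orderEmbOfFin rfl
  obtain ⟨a₀, ha₀⟩ : ∃ a₀, ρ a₀ = i := by
    rw [← Set.mem_range, Finset.range_orderEmbOfFin]
    exact Finset.mem_insert_self i K
  have hρj : ∀ a, ρ a ≠ j := fun a hj => by
    have := (insert i K).orderEmbOfFin_mem rfl a
    rw [hj, Finset.mem_insert] at this
    rcases this with h' | h'
    · simp [h', Nat.dist_self] at hij
    · exact hjK h'
  have hγ : (insert j K).orderEmbOfFin h.symm = Function.update ρ a₀ j := funext fun a => by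
    rw [Finset.orderEmbOfFin_insert_eq_ite hjK (Fin.lt_iff_lt_of_dist_eq_one hiK hjK hij) rfl,
      Function.update_apply]
    change (if ρ a = i then j else ρ a) = _
    exact if_congr (by rw [← ρ.injective.eq_iff, ha₀]) rfl rfl
  have hsq := sq_dvd_det_submatrix_update_sub (trekSigma n t) X
    (fun _ _ => X_dvd_trekSigma_of_ne t) ρ.injective a₀ hρj
  rw [ha₀] at hsq
  have hij0 : (trekSigma n t i j).coeff 0 = 0 :=
    X_dvd_iff.mp (by simpa [hij] using X_pow_dist_dvd_trekSigma t i j)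
  rw [finMinor_eq_det_submatrix, hγ]
  calc _ = (trekSigma n t i j *
          ∏ a ∈ Finset.univ.erase a₀, trekSigma n t (ρ a) (ρ a)).coeff 1 := by
        rw [← sub_eq_zero, ← coeff_sub]
        exact X_pow_dvd_iff.mp hsq 1 one_lt_two
    _ = (trekSigma n t i j).coeff 1 *
          ∏ a ∈ Finset.univ.erase a₀, (trekSigma n t (ρ a) (ρ a)).coeff 0 := by
        rw [coeff_one_mul_of_coeff_zero_eq_zero hij0, coeff_zero_prod]
    _ = 1 := by
        rw [trekSigma_coeff_one_of_dist_eq_one t hij, one_mul]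
        exact Finset.prod_eq_one fun a _ => trekSigma_coeff_zero_self t _

end Trek

/-- For distinct nodes `i ≠ j` on a trek whose shortest trek between them has
total length `ℓ + r = dist(i,j)` (in the consecutive numbering), the minor
`det Σ(ζ)_{iK,jK}` is either identically zero or its lowest-degree term has
degree at least `ℓ + r`; if `i` and `j` are adjacent, the lowest-degree term
equals `ζ`. -/
theorem trek_minor_lowest_degree (n t : ℕ) (i j : Fin n)
    (K : Finset (Fin n)) (hiK : i ∉ K) (hjK : j ∉ K) :
    (finMinor (trekSigma n t) (insert i K) (insert j K)
        (by rw [Finset.card_insert_of_notMem hiK, Finset.card_insert_of_notMem hjK]) = 0 ∨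
      Nat.dist (i : ℕ) (j : ℕ) ≤
        (finMinor (trekSigma n t) (insert i K) (insert j K)
          (by rw [Finset.card_insert_of_notMem hiK,
            Finset.card_insert_of_notMem hjK])).natTrailingDegree) ∧
    (Nat.dist (i : ℕ) (j : ℕ) = 1 →
      (finMinor (trekSigma n t) (insert i K) (insert j K)
          (by rw [Finset.card_insert_of_notMem hiK,
            Finset.card_insert_of_notMem hjK])).natTrailingDegree = 1 ∧
        (finMinor (trekSigma n t) (insert i K) (insert j K)
          (by rw [Finset.card_insert_of_notMem hiK,
            Finset.card_insert_of_notMem hjK])).trailingCoeff = 1) := by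
  have hcard : (insert i K).card = (insert j K).card := by
    rw [Finset.card_insert_of_notMem hiK, Finset.card_insert_of_notMem hjK]
  have hdvd := X_pow_dist_dvd_finMinor t hiK hjK hcard
  set M := finMinor (trekSigma n t) (insert i K) (insert j K) hcard
  refine ⟨?_, fun hij => ?_⟩
  · by_cases hM : M = 0
    · exact Or.inl hM
    · exact Or.inr (le_natTrailingDegree hM (X_pow_dvd_iff.mp hdvd))
  · have h1 : M.coeff 1 = 1 := finMinor_coeff_one_of_dist_eq_one t hiK hjK hij hcard
    have h1' : M.coeff 1 ≠ 0 := h1 ▸ one_ne_zero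
    have hdeg : M.natTrailingDegree = 1 := le_antisymm (natTrailingDegree_le_of_ne_zero h1')
      (le_natTrailingDegree (fun h => h1' (h ▸ coeff_zero 1)) (hij ▸ X_pow_dvd_iff.mp hdvd))
    exact ⟨hdeg, by rw [trailingCoeff, hdeg, h1]⟩
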